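/- arXiv:2312.08129 — 2 statements merged into one kernel-verified Lean document; each statement's English description precedes it below -/
import Mathlib

section
/- Let (S,+) be a commutative semigroup, let A ⊆ S be a CR-set in S, and let l ∈ ℕ. Then the set C = {(a,d) ∈ S × S : {a, a+d, a+2d, ..., a+ld} ⊆ A} is a CR-set in the commutative semigroup S × S (with coordinatewise addition). -/
/-! Fix `c ∈ S`. Given sequences `f = (f₁, f₂)` in `S × S`, apply the CR property of `A` to the
`k (l + 1)` sequences `t ↦ f₁(t) + j (c + f₂(t))`, `j ≤ l`: this gives `b` and `H` with
`b + Σ_H (f₁ + j (c + f₂)) ∈ A` for all `j ≤ l`. As `Σ_H` is additive and commutes with `d ↦ j d`,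
this element is `(b + Σ_H f₁) + j (Σ_H c + Σ_H f₂)`, the `j`-th term of the progression given by
the pair `(b, Σ_H c) + Σ_H f`. The constant `c` supplies an initial term for the difference, as `S`
need not have a zero. -/

instance addStdCommutative {S : Type*} [AddCommSemigroup S] :
    Std.Commutative (α := S) (· + ·) := ⟨add_comm⟩

instance addStdAssociative {S : Type*} [AddSemigroup S] :
    Std.Associative (α := S) (· + ·) := ⟨add_assoc⟩

/-- `A` is a CR-set in the commutative semigroup `(S, +)`: for each `k ∈ ℕ` there exists
`r ∈ ℕ` such that for every family `F` of at most `k` sequences in `S`, there exist `a ∈ S`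
and a nonempty finite `H ⊆ ℕ` with `max H ≤ r` such that `a + Σ_{t ∈ H} f(t) ∈ A` for all
`f ∈ F`.  Here `a + Σ_{t ∈ H} f(t)` is expressed as `H.fold (· + ·) a f`. -/
def IsAddCRSet {S : Type*} [AddCommSemigroup S] (A : Set S) : Prop :=
  ∀ k : ℕ, ∃ r : ℕ, ∀ F : Finset (ℕ → S), F.card ≤ k →
    ∃ a : S, ∃ H : Finset ℕ, H.Nonempty ∧ (∀ t ∈ H, t ≤ r) ∧
      ∀ f ∈ F, (H.fold (· + ·) a f : S) ∈ A

/-- `(j+1)` summands: `nsmulSucc j d = d + d + ⋯ + d` with `j + 1` copies of `d`. -/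
def nsmulSucc {S : Type*} [AddSemigroup S] : ℕ → S → S
  | 0, d => d
  | n + 1, d => nsmulSucc n d + d

namespace Finset

variable {ι S : Type*} [AddCommSemigroup S]

theorem fold_add_eq_add_fold (s : Finset ι) (x y : S) (g : ι → S) :
    (s.fold (· + ·) (x + y) g : S) = x + (s.fold (· + ·) y g : S) :=
  (Multiset.fold_cons'_left _ _ _ _).symm.trans (Multiset.fold_cons_left _ _ _ _)

variable [DecidableEq ι]

/-- `∑ t ∈ s, g t` for nonempty `s`, which needs no zero in `S`. -/
noncomputable def nonemptySum (s : Finset ι) (hs : s.Nonempty) (g : ι → S) : S :=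
  ((s.erase hs.choose).fold (· + ·) (g hs.choose) g : S)

variable {s : Finset ι} (hs : s.Nonempty)

theorem fold_eq_add_nonemptySum (a : S) (g : ι → S) :
    (s.fold (· + ·) a g : S) = a + s.nonemptySum hs g := by
  conv_lhs => rw [← insert_erase hs.choose_spec]
  rw [fold_insert (s.notMem_erase _), ← fold_add_eq_add_fold, add_comm, fold_add_eq_add_fold,
    nonemptySum]

theorem nonemptySum_add (g h : ι → S) :
    s.nonemptySum hs (fun t => g t + h t) = s.nonemptySum hs g + s.nonemptySum hs h :=
  fold_op_distrib

theorem map_nonemptySum {T : Type*} [AddCommSemigroup T] (φ : S → T)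
    (hφ : ∀ x y, φ (x + y) = φ x + φ y) (g : ι → S) :
    φ (s.nonemptySum hs g) = s.nonemptySum hs (fun t => φ (g t)) :=
  (fold_hom hφ).symm

end Finset

namespace Prod

variable {ι S T : Type*} [AddCommSemigroup S] [AddCommSemigroup T]

theorem fst_fold (s : Finset ι) (p : S × T) (f : ι → S × T) :
    (s.fold (· + ·) p f : S × T).1 = (s.fold (· + ·) p.1 (fun t => (f t).1) : S) :=
  (Finset.fold_hom fst_add).symm

theorem snd_fold (s : Finset ι) (p : S × T) (f : ι → S × T) :
    (s.fold (· + ·) p f : S × T).2 = (s.fold (· + ·) p.2 (fun t => (f t).2) : T) :=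
  (Finset.fold_hom snd_add).symm

end Prod

section ArithmeticProgression

variable {S : Type*} [AddCommSemigroup S]

theorem nsmulSucc_add (j : ℕ) (x y : S) :
    nsmulSucc j (x + y) = nsmulSucc j x + nsmulSucc j y := by
  induction j with
  | zero => rfl
  | succ j ih => rw [nsmulSucc, nsmulSucc, nsmulSucc, ih, add_add_add_comm]

/-- The term `x + j d` of the progression with first term `x` and difference `d`. -/
def apTerm (x d : S) : ℕ → S
  | 0 => x
  | j + 1 => x + nsmulSucc j d

theorem apTerm_add_left (x y d : S) (j : ℕ) : apTerm (x + y) d j = x + apTerm y d j := by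
  cases j with
  | zero => rfl
  | succ j => exact add_assoc x y _

theorem forall_apTerm_mem_iff {A : Set S} {x d : S} {l : ℕ} :
    (∀ j ≤ l, apTerm x d j ∈ A) ↔ x ∈ A ∧ ∀ j < l, x + nsmulSucc j d ∈ A :=
  ⟨fun h => ⟨h 0 l.zero_le, fun j hj => h (j + 1) hj⟩, fun ⟨h₀, h⟩ j hj => by
    cases j with
    | zero => exact h₀
    | succ j => exact h j hj⟩

variable {ι : Type*} [DecidableEq ι] {s : Finset ι} (hs : s.Nonempty)

theorem apTerm_nonemptySum (u v : ι → S) (j : ℕ) :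
    apTerm (s.nonemptySum hs u) (s.nonemptySum hs v) j
      = s.nonemptySum hs (fun t => apTerm (u t) (v t) j) := by
  cases j with
  | zero => rfl
  | succ j =>
    rw [apTerm, Finset.map_nonemptySum hs _ (nsmulSucc_add j), ← Finset.nonemptySum_add]
    rfl

theorem apTerm_fold (b c : S) (u v : ι → S) (j : ℕ) :
    apTerm (s.fold (· + ·) b u : S) (s.fold (· + ·) (s.nonemptySum hs fun _ => c) v : S) j
      = (s.fold (· + ·) b (fun t => apTerm (u t) (c + v t) j) : S) := by
  rw [Finset.fold_eq_add_nonemptySum hs, Finset.fold_eq_add_nonemptySum hs,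
    Finset.fold_eq_add_nonemptySum hs, ← Finset.nonemptySum_add, apTerm_add_left,
    apTerm_nonemptySum]

end ArithmeticProgression

theorem IsAddCRSet.nonempty {S : Type*} [AddCommSemigroup S] {A : Set S} (hA : IsAddCRSet A) :
    Nonempty S :=
  let ⟨_, hr⟩ := hA 0
  let ⟨a, _⟩ := hr ∅ (by simp)
  ⟨a⟩

/-- If `A` is a CR-set in a commutative semigroup `(S, +)` and `l ∈ ℕ`, then
`C = {(a, d) : {a, a + d, a + 2d, …, a + ld} ⊆ A}` is a CR-set in `S × S`. -/
theorem abundance_of_AP_in_CR_commutative {S : Type*} [AddCommSemigroup S] (A : Set S)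
    (hA : IsAddCRSet A) (l : ℕ) :
    IsAddCRSet {q : S × S | q.1 ∈ A ∧ ∀ j : ℕ, j < l → q.1 + nsmulSucc j q.2 ∈ A} := by
  classical
  intro k
  obtain ⟨c⟩ := hA.nonempty
  obtain ⟨r, hr⟩ := hA (k * (l + 1))
  refine ⟨r, fun F hF => ?_⟩
  let G : (ℕ → S × S) × ℕ → ℕ → S := fun p t => apTerm (p.1 t).1 (c + (p.1 t).2) p.2
  have hG : ((F ×ˢ Finset.range (l + 1)).image G).card ≤ k * (l + 1) := by
    grw [Finset.card_image_le, Finset.card_product, Finset.card_range, hF]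
  obtain ⟨b, H, hH, hHr, hmem⟩ := hr _ hG
  refine ⟨(b, H.nonemptySum hH fun _ => c), H, hH, hHr, fun f hf => ?_⟩
  rw [Set.mem_ofPred_eq, ← forall_apTerm_mem_iff, Prod.fst_fold, Prod.snd_fold]
  intro j hj
  rw [apTerm_fold hH]
  exact hmem (G (f, j)) <| Finset.mem_image_of_mem G <|
    Finset.mem_product.2 ⟨hf, Finset.mem_range.2 (Nat.lt_succ_of_le hj)⟩
end

section
/- Let (S,·) be an arbitrary semigroup and let A ⊆ S be a SCR-set in S. Then the set D = {(a₁,a₂,d) ∈ S × S × S : a₁·d·a₂ ∈ A and a₁·d·d·a₂ ∈ A} is a CR-set in the semigroup S × S × S (with coordinatewise multiplication). -/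
/-- `A` is a strong combinatorially rich set (SCR-set) in the semigroup `S`. -/
def IsSCRSet {S : Type*} [Semigroup S] (A : Set S) : Prop :=
  ∀ k : ℕ, ∃ r : ℕ, ∀ F : Finset (ℕ → S), F.card ≤ k →
    ∃ a₁ a₂ : S, ∃ t ≤ r, ∀ f ∈ F, a₁ * f t * a₂ ∈ A

/-- `A` is a combinatorially rich set (CR-set) in the semigroup `S`. -/
def IsCRSet {S : Type*} [Semigroup S] (A : Set S) : Prop :=
  ∀ k : ℕ, ∃ r m : ℕ, 0 < m ∧
    ∀ F : Finset (ℕ → S), F.card ≤ k →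
      ∃ a : Fin (m + 1) → S, ∃ t : Fin m → ℕ, StrictMono t ∧ (∀ i, t i ≤ r) ∧
        ∀ f ∈ F,
          (List.ofFn fun i : Fin m => a i.castSucc * f (t i)).foldr (· * ·) (a (Fin.last m)) ∈ A

/-!
`D` is even an SCR-set. Fix `s ∈ S`; since `(u₁, s, s) * (x, y, d) * (s, u₂, s) =
(u₁ x s, s y u₂, s d s)`, the two conditions defining `D` for this product say that
`u₁ (x s s d s s y) u₂ ∈ A` and `u₁ (x s s d s s d s s y) u₂ ∈ A`. Applying the SCR property of `A`
to the `2k` sequences of words `x s s d s s y` and `x s s d s s d s s y` obtained from `k` sequences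
of triples gives one choice of `u₁, u₂, t` that works for all of them.
-/

namespace IsSCRSet

variable {S : Type*} [Semigroup S] {A : Set S}

theorem isCRSet (hA : IsSCRSet A) : IsCRSet A := by
  intro k
  obtain ⟨r, hr⟩ := hA k
  refine ⟨r, 1, one_pos, fun F hF => ?_⟩
  obtain ⟨a₁, a₂, t, ht, hmem⟩ := hr F hF
  refine ⟨![a₁, a₂], fun _ => t, Subsingleton.strictMono _, fun _ => ht, fun f hf => ?_⟩
  simpa using hmem f hf

theorem nonempty (hA : IsSCRSet A) : Nonempty S := by
  obtain ⟨r, hr⟩ := hA 0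
  obtain ⟨s, -, -⟩ := hr ∅ (by simp)
  exact ⟨s⟩

theorem exists_forall_mem_pair {T : Type*} (hA : IsSCRSet A) (g h : T → ℕ → S) (k : ℕ) :
    ∃ r : ℕ, ∀ F : Finset T, F.card ≤ k →
      ∃ a₁ a₂ : S, ∃ t ≤ r, ∀ x ∈ F, a₁ * g x t * a₂ ∈ A ∧ a₁ * h x t * a₂ ∈ A := by
  classical
  obtain ⟨r, hr⟩ := hA (k + k)
  refine ⟨r, fun F hF => ?_⟩
  have hcard : (F.image g ∪ F.image h).card ≤ k + k :=
    (Finset.card_union_le _ _).trans <|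
      add_le_add (Finset.card_image_le.trans hF) (Finset.card_image_le.trans hF)
  obtain ⟨a₁, a₂, t, ht, hmem⟩ := hr _ hcard
  exact ⟨a₁, a₂, t, ht, fun x hx =>
    ⟨hmem _ (Finset.mem_union_left _ (Finset.mem_image_of_mem g hx)),
      hmem _ (Finset.mem_union_right _ (Finset.mem_image_of_mem h hx))⟩⟩

theorem progressions (hA : IsSCRSet A) :
    IsSCRSet {x : S × S × S | x.1 * x.2.2 * x.2.1 ∈ A ∧ x.1 * x.2.2 * x.2.2 * x.2.1 ∈ A} := by
  obtain ⟨s⟩ := hA.nonempty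
  intro k
  obtain ⟨r, hr⟩ := hA.exists_forall_mem_pair
    (fun (f : ℕ → S × S × S) t => (f t).1 * s * s * (f t).2.2 * s * s * (f t).2.1)
    (fun (f : ℕ → S × S × S) t =>
      (f t).1 * s * s * (f t).2.2 * s * s * (f t).2.2 * s * s * (f t).2.1) k
  refine ⟨r, fun F hF => ?_⟩
  obtain ⟨u₁, u₂, t, ht, hmem⟩ := hr F hF
  refine ⟨(u₁, s, s), (s, u₂, s), t, ht, fun f hf => ?_⟩
  simpa [mul_assoc] using hmem f hf

end IsSCRSet

/-- If `A` is a SCR-set in a semigroup `S`, then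
`D = {(a₁, a₂, d) : a₁ d a₂ ∈ A and a₁ d d a₂ ∈ A}` is a CR-set in `S × S × S`. -/
theorem abundance_of_progressions_in_SCR {S : Type*} [Semigroup S] (A : Set S)
    (hA : IsSCRSet A) :
    IsCRSet {x : S × S × S | x.1 * x.2.2 * x.2.1 ∈ A ∧ x.1 * x.2.2 * x.2.2 * x.2.1 ∈ A} :=
  hA.progressions.isCRSet
end
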